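/- Fix k ≥ 2 and the array A(r, s·k+c) = (s + r·c) mod k. The map (r,j) ↦ (A(r,j), A(r+1,j), A(r+1,j+1)) from ZMod k × ZMod (k²) to (ZMod k)³ is injective. -/
import Mathlib


/-- The modular array: entry in row `r` and column `j = s*k + c` (square `s`,
column-within-square `c`) is `(s + r*c) mod k`. -/
def LArray (k : ℕ) (r : ZMod k) (j : ZMod (k ^ 2)) : ZMod k :=
  ((j.val / k : ℕ) : ZMod k) + r * ((j.val % k : ℕ) : ZMod k)

lemma LArray_succ (k : ℕ) (hk : 2 ≤ k) (r : ZMod k) (j : ZMod (k ^ 2)) :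
    LArray k r (j + 1) =
      (((j.val + 1) / k : ℕ) : ZMod k) + r * (((j.val + 1) % k : ℕ) : ZMod k) := by
  have hk0 : 0 < k := by omega
  have hk2 : 1 < k ^ 2 := by nlinarith
  haveI : NeZero (k ^ 2) := ⟨by omega⟩
  haveI : Fact (1 < k ^ 2) := ⟨hk2⟩
  have hv : (j + 1).val = (j.val + 1) % k ^ 2 := by
    rw [ZMod.val_add, ZMod.val_one]
  set m := j.val + 1 with hm
  unfold LArray
  rw [hv]
  have hmodmod : m % k ^ 2 % k = m % k :=
    Nat.mod_mod_of_dvd m (dvd_pow_self k two_ne_zero)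
  have hdiv : m / k = k * (m / k ^ 2) + (m % k ^ 2) / k := by
    conv_lhs => rw [← Nat.div_add_mod m (k ^ 2)]
    rw [pow_two, mul_assoc, Nat.mul_add_div hk0]
  congr 1
  · rw [hdiv]
    push_cast
    simp [ZMod.natCast_self]
  · rw [hmodmod]

theorem stmt_12 (k : ℕ) (hk : 2 ≤ k) :
    Function.Injective (fun (p : ZMod k × ZMod (k ^ 2)) =>
      (LArray k p.1 p.2, LArray k (p.1 + 1) p.2, LArray k (p.1 + 1) (p.2 + 1))) := by
  have hk0 : 0 < k := by omega
  haveI : NeZero k := ⟨by omega⟩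
  haveI : NeZero (k ^ 2) := ⟨by positivity⟩
  rintro ⟨r, j⟩ ⟨r', j'⟩ h
  simp only [Prod.mk.injEq] at h
  obtain ⟨h1, h2, h3⟩ := h
  rw [LArray_succ k hk, LArray_succ k hk] at h3
  unfold LArray at h1 h2
  set s := j.val / k with hs
  set c := j.val % k with hc
  set s' := j'.val / k with hs'
  set c' := j'.val % k with hc'
  have hjv : j.val < k ^ 2 := ZMod.val_lt j
  have hjv' : j'.val < k ^ 2 := ZMod.val_lt j'
  have hck : c < k := Nat.mod_lt _ hk0
  have hck' : c' < k := Nat.mod_lt _ hk0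
  have hsk : s < k := by
    rw [hs, Nat.div_lt_iff_lt_mul hk0, ← pow_two]; exact hjv
  have hsk' : s' < k := by
    rw [hs', Nat.div_lt_iff_lt_mul hk0, ← pow_two]; exact hjv'
  have hj : j.val = k * s + c := (Nat.div_add_mod j.val k).symm
  have hj' : j'.val = k * s' + c' := (Nat.div_add_mod j'.val k).symm
  clear_value s c s' c'
  -- recover c
  have hcc : (c : ZMod k) = (c' : ZMod k) := by linear_combination h2 - h1
  have hcnat : c = c' := by
    have := congrArg ZMod.val hcc
    rwa [ZMod.val_cast_of_lt hck, ZMod.val_cast_of_lt hck'] at this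
  subst hcnat
  -- key: nat-valued injectivity
  have natinj : ∀ a b : ℕ, a < k → b < k → (a : ZMod k) = (b : ZMod k) → a = b := by
    intro a b ha hb hab
    have := congrArg ZMod.val hab
    rwa [ZMod.val_cast_of_lt ha, ZMod.val_cast_of_lt hb] at this
  have valinj : j.val = j'.val → j = j' := by
    intro hv
    have := congrArg (Nat.cast : ℕ → ZMod (k ^ 2)) hv
    rwa [ZMod.natCast_val, ZMod.natCast_val, ZMod.cast_id, ZMod.cast_id] at this
  by_cases hce : c + 1 < k
  · -- c + 1 < k : j.val + 1 = k*s + (c+1)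
    have hd1 : (j.val + 1) / k = s := by
      have : j.val + 1 = k * s + (c + 1) := by omega
      rw [this, Nat.mul_add_div hk0, Nat.div_eq_of_lt hce, add_zero]
    have hm1 : (j.val + 1) % k = c + 1 := by
      have : j.val + 1 = k * s + (c + 1) := by omega
      rw [this, Nat.mul_add_mod, Nat.mod_eq_of_lt hce]
    have hd1' : (j'.val + 1) / k = s' := by
      have : j'.val + 1 = k * s' + (c + 1) := by omega
      rw [this, Nat.mul_add_div hk0, Nat.div_eq_of_lt hce, add_zero]
    have hm1' : (j'.val + 1) % k = c + 1 := by
      have : j'.val + 1 = k * s' + (c + 1) := by omega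
      rw [this, Nat.mul_add_mod, Nat.mod_eq_of_lt hce]
    rw [hd1, hm1, hd1', hm1'] at h3
    have hrr : r = r' := by
      push_cast at h3 h2 ⊢
      linear_combination h3 - h2
    subst hrr
    have hss : (s : ZMod k) = (s' : ZMod k) := by linear_combination h1
    obtain rfl := natinj s s' hsk hsk' hss
    exact Prod.ext rfl (valinj (hj.trans hj'.symm))
  · -- c = k - 1 : j.val + 1 = k * (s + 1)
    have hceq : c = k - 1 := by omega
    have hd1 : (j.val + 1) / k = s + 1 := by
      have : j.val + 1 = k * (s + 1) := by rw [Nat.mul_succ]; omega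
      rw [this, Nat.mul_div_cancel_left _ hk0]
    have hm1 : (j.val + 1) % k = 0 := by
      have : j.val + 1 = k * (s + 1) := by rw [Nat.mul_succ]; omega
      rw [this, Nat.mul_mod_right]
    have hd1' : (j'.val + 1) / k = s' + 1 := by
      have : j'.val + 1 = k * (s' + 1) := by rw [Nat.mul_succ]; omega
      rw [this, Nat.mul_div_cancel_left _ hk0]
    have hm1' : (j'.val + 1) % k = 0 := by
      have : j'.val + 1 = k * (s' + 1) := by rw [Nat.mul_succ]; omega
      rw [this, Nat.mul_mod_right]
    rw [hd1, hm1, hd1', hm1'] at h3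
    push_cast at h3
    have hss : (s : ZMod k) = (s' : ZMod k) := by linear_combination h3
    obtain rfl := natinj s s' hsk hsk' hss
    have hcneg : (c : ZMod k) = -1 := by
      rw [hceq]
      push_cast [Nat.cast_sub (by omega : 1 ≤ k)]
      simp
    rw [hcneg] at h1
    have hrr : r = r' := by linear_combination -h1
    exact Prod.ext hrr (valinj (hj.trans hj'.symm))
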